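/- Riemann-Roch for graphs (Baker–Norine): for any divisor D on a finite connected graph G of genus g, r(D) − r(K_G − D) = deg(D) − g + 1, where K_G = Σ_v (val(v) − 2)·v. -/

import Mathlib

namespace ChipFiring

open Finset

variable {V E : Type} [Fintype V] [DecidableEq V] [Fintype E] [DecidableEq E]

/-- The number of edges between the vertices `v` and `w` in the multigraph with
edge set `E` and endpoint maps `fst`, `snd`. -/
def mult (fst snd : E → V) (v w : V) : ℕ :=
  (univ.filter fun e => (fst e = v ∧ snd e = w) ∨ (fst e = w ∧ snd e = v)).card

/-- The valence of a vertex: the number of edge-endpoints at it. -/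
def valence (fst snd : E → V) (v : V) : ℕ := ∑ w, mult fst snd v w

/-- The degree of a divisor `D : V → ℤ`. -/
def deg (D : V → ℤ) : ℤ := ∑ v, D v

/-- The graph Laplacian applied to `f : V → ℤ`; this is the principal divisor `div f`,
with `div f (v) = Σ_{w adjacent to v} (f v - f w)` counted with edge multiplicity. -/
def lap (fst snd : E → V) (f : V → ℤ) : V → ℤ :=
  fun v => ∑ w, (mult fst snd v w : ℤ) * (f v - f w)

/-- Two divisors are linearly equivalent if they differ by a principal divisor. -/
def LinEquiv (fst snd : E → V) (D D' : V → ℤ) : Prop :=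
  ∃ f : V → ℤ, D - D' = lap fst snd f

/-- A divisor is effective if all its coefficients are nonnegative. -/
def Effective (D : V → ℤ) : Prop := ∀ v, 0 ≤ D v

/-- Adjacency: there is an edge between `v` and `w`. -/
def Adj (fst snd : E → V) (v w : V) : Prop :=
  ∃ e, (fst e = v ∧ snd e = w) ∨ (fst e = w ∧ snd e = v)

/-- The multigraph is connected. -/
def Connected (fst snd : E → V) : Prop :=
  ∀ v w : V, Relation.ReflTransGen (Adj fst snd) v w

/-- The multigraph has no loop edges. -/
def Loopless (fst snd : E → V) : Prop := ∀ e, fst e ≠ snd e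

/-- The chip-firing move at a vertex `v`. -/
def fire (fst snd : E → V) (v : V) (D : V → ℤ) : V → ℤ :=
  fun w => if w = v then D v - (valence fst snd v : ℤ) else D w + (mult fst snd v w : ℤ)

/-- `D` has rank at least `r`: subtracting any effective divisor of degree `r`
leaves a divisor linearly equivalent to an effective one. -/
def rankGe (fst snd : E → V) (D : V → ℤ) (r : ℕ) : Prop :=
  ∀ Ediv : V → ℤ, Effective Ediv → deg Ediv = (r : ℤ) →
    ∃ D', Effective D' ∧ LinEquiv fst snd (D - Ediv) D'

/-- The Baker–Norine rank of a divisor: `-1` if `D` is not equivalent to an effective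
divisor, and otherwise the largest `r ≥ 0` such that `rankGe` holds. -/
noncomputable def divRank (fst snd : E → V) (D : V → ℤ) : ℤ :=
  sSup {r : ℤ | r = -1 ∨ (0 ≤ r ∧ rankGe fst snd D r.toNat)}

/-- The canonical divisor `K_G = Σ_v (val v - 2) v`. -/
def canonical (fst snd : E → V) : V → ℤ := fun v => (valence fst snd v : ℤ) - 2

/-- The genus (first Betti number) `|E| - |V| + 1` of the multigraph. -/
def genus (V E : Type) [Fintype V] [Fintype E] : ℤ :=
  (Fintype.card E : ℤ) - (Fintype.card V : ℤ) + 1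

/-- The Laplacian as an additive group homomorphism. -/
def lapHom (fst snd : E → V) : (V → ℤ) →+ (V → ℤ) where
  toFun := lap fst snd
  map_zero' := by funext v; simp [lap]
  map_add' f g := by
    funext v
    simp only [lap, Pi.add_apply]
    rw [← Finset.sum_add_distrib]
    exact Finset.sum_congr rfl fun w _ => by ring

/-- The group of divisors of degree zero. -/
def Div0 (V : Type) [Fintype V] : AddSubgroup (V → ℤ) where
  carrier := {D | deg D = 0}
  zero_mem' := by simp [deg]
  add_mem' := by
    intro a b ha hb
    have h : deg (a + b) = deg a + deg b := by
      simp [deg, Finset.sum_add_distrib]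
    simp only [Set.mem_setOf_eq] at *
    omega
  neg_mem' := by
    intro a ha
    have h : deg (-a) = -deg a := by
      simp [deg]
    simp only [Set.mem_setOf_eq] at *
    omega

/-- The group of principal divisors: the image of the graph Laplacian. -/
def Prin (fst snd : E → V) : AddSubgroup (V → ℤ) := (lapHom fst snd).range

/-- The Jacobian (sandpile group) `Div⁰(G)/Prin(G)`. -/
abbrev Jac (fst snd : E → V) : Type _ :=
  Div0 V ⧸ (Prin fst snd).addSubgroupOf (Div0 V)
section Basics

variable (fst snd : E → V)

lemma mult_comm' (v w : V) : mult fst snd v w = mult fst snd w v := by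
  unfold mult; congr 1; ext e; simp only [mem_filter]; tauto

lemma mult_self (hl : Loopless fst snd) (v : V) : mult fst snd v v = 0 := by
  unfold mult; rw [Finset.card_eq_zero, Finset.filter_eq_empty_iff]
  intro e _
  rintro (⟨h1, h2⟩ | ⟨h1, h2⟩) <;> exact hl e (h1.trans h2.symm)

lemma deg_lap (f : V → ℤ) : deg (lap fst snd f) = 0 := by
  have h : deg (lap fst snd f) = - deg (lap fst snd f) := by
    calc deg (lap fst snd f) = ∑ v, ∑ w, (mult fst snd v w : ℤ) * (f v - f w) := rfl
    _ = ∑ w, ∑ v, (mult fst snd v w : ℤ) * (f v - f w) := Finset.sum_comm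
    _ = ∑ v, ∑ w, -((mult fst snd v w : ℤ) * (f v - f w)) := by
        apply Finset.sum_congr rfl; intro v _; apply Finset.sum_congr rfl; intro w _
        rw [mult_comm' fst snd w v]; ring
    _ = - deg (lap fst snd f) := by
        simp [deg, lap, Finset.sum_neg_distrib]
  omega

lemma deg_sub (D D' : V → ℤ) : deg (D - D') = deg D - deg D' := by
  simp [deg, Finset.sum_sub_distrib]

lemma deg_add (D D' : V → ℤ) : deg (D + D') = deg D + deg D' := by
  simp [deg, Finset.sum_add_distrib]

end Basics
section Nu

set_option linter.unusedSectionVars false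
set_option maxHeartbeats 1000000

variable (fst snd : E → V)

/-- ν for an ordering given by an injective `ord : V → ℤ`. -/
def nu (ord : V → ℤ) : V → ℤ := fun v =>
  (∑ w ∈ univ.filter (fun w => ord w < ord v), (mult fst snd v w : ℤ)) - 1

/-- Positive degree. -/
def degp (D : V → ℤ) : ℤ := ∑ v, max (D v) 0

lemma degp_nonneg (D : V → ℤ) : 0 ≤ degp D :=
  Finset.sum_nonneg fun v _ => le_max_right _ _

lemma deg_eq_degp_sub (D : V → ℤ) : deg D = degp D - degp (-D) := by
  unfold deg degp
  rw [← Finset.sum_sub_distrib]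
  apply Finset.sum_congr rfl
  intro v _
  simp only [Pi.neg_apply]
  omega

lemma degp_le_deg_of_le {D E' : V → ℤ} (h : ∀ v, D v ≤ E' v) (hE : Effective E') :
    degp D ≤ deg E' := by
  apply Finset.sum_le_sum
  intro v _
  exact max_le (h v) (hE v)

/-- each edge contributes twice to `Σ_v Σ_w mult v w`. -/
lemma sum_mult (hl : Loopless fst snd) :
    ∑ v, ∑ w, (mult fst snd v w : ℤ) = 2 * (Fintype.card E : ℤ) := by
  have inner : ∀ e : E, (∑ v : V, ∑ w : V,
      (if (fst e = v ∧ snd e = w) ∨ (fst e = w ∧ snd e = v) then (1:ℤ) else 0)) = 2 := by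
    intro e
    have hne : fst e ≠ snd e := hl e
    have h2 : ∀ v w : V, ((if (fst e = v ∧ snd e = w) ∨ (fst e = w ∧ snd e = v) then (1:ℤ) else 0))
        = (if fst e = v ∧ snd e = w then (1:ℤ) else 0) + (if fst e = w ∧ snd e = v then (1:ℤ) else 0) := by
      intro v w
      rcases eq_or_ne (fst e) v with h|h <;> rcases eq_or_ne (snd e) w with h'|h' <;>
        rcases eq_or_ne (fst e) w with h''|h'' <;> rcases eq_or_ne (snd e) v with h'''|h''' <;> simp_all
    simp only [h2, Finset.sum_add_distrib, ite_and]
    simp [Finset.sum_ite_eq, Finset.sum_ite_eq']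
  calc ∑ v, ∑ w, (mult fst snd v w : ℤ)
      = ∑ v : V, ∑ w : V, ∑ e : E,
        (if (fst e = v ∧ snd e = w) ∨ (fst e = w ∧ snd e = v) then (1:ℤ) else 0) := by
        apply Finset.sum_congr rfl; intro v _
        apply Finset.sum_congr rfl; intro w _
        simp [mult, Finset.sum_boole]
    _ = ∑ v : V, ∑ e : E, ∑ w : V,
        (if (fst e = v ∧ snd e = w) ∨ (fst e = w ∧ snd e = v) then (1:ℤ) else 0) :=
        Finset.sum_congr rfl fun v _ => Finset.sum_comm
    _ = ∑ e : E, ∑ v : V, ∑ w : V,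
        (if (fst e = v ∧ snd e = w) ∨ (fst e = w ∧ snd e = v) then (1:ℤ) else 0) := Finset.sum_comm
    _ = ∑ e : E, (2:ℤ) := Finset.sum_congr rfl fun e _ => inner e
    _ = 2 * (Fintype.card E : ℤ) := by simp [Finset.sum_const, Finset.card_univ, mul_comm]

lemma deg_canonical (hl : Loopless fst snd) :
    deg (canonical fst snd) = 2 * (Fintype.card E : ℤ) - 2 * (Fintype.card V : ℤ) := by
  unfold deg canonical valence
  rw [Finset.sum_sub_distrib]
  push_cast
  rw [sum_mult fst snd hl]
  simp [Finset.card_univ, mul_comm]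

lemma nu_add_nu_neg (hl : Loopless fst snd) {ord : V → ℤ} (hinj : Function.Injective ord) (v : V) :
    nu fst snd ord v + nu fst snd (fun w => - ord w) v = canonical fst snd v := by
  unfold nu canonical valence
  rw [Finset.sum_filter, Finset.sum_filter]
  have key : (∑ w, if ord w < ord v then (mult fst snd v w:ℤ) else 0)
      + (∑ w, if -ord w < -ord v then (mult fst snd v w:ℤ) else 0)
      = ∑ w, (mult fst snd v w : ℤ) := by
    rw [← Finset.sum_add_distrib]
    apply Finset.sum_congr rfl; intro w _
    rcases lt_trichotomy (ord w) (ord v) with h|h|h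
    · rw [if_pos h, if_neg (by omega)]; ring
    · have hw : w = v := hinj h
      subst hw
      rw [if_neg (by omega), if_neg (by omega), mult_self fst snd hl]
      simp
    · rw [if_neg (by omega), if_pos (by omega)]; ring
  push_cast
  omega

lemma deg_nu_eq_deg_nu_neg (hl : Loopless fst snd) (ord : V → ℤ) :
    deg (nu fst snd ord) = deg (nu fst snd (fun w => - ord w)) := by
  unfold deg nu
  rw [Finset.sum_sub_distrib, Finset.sum_sub_distrib]
  congr 1
  simp only [Finset.sum_filter]
  calc (∑ v, ∑ w, if ord w < ord v then (mult fst snd v w : ℤ) else 0)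
      = ∑ w, ∑ v, (if ord w < ord v then (mult fst snd v w : ℤ) else 0) := Finset.sum_comm
    _ = ∑ v, ∑ w, (if -ord w < -ord v then (mult fst snd v w : ℤ) else 0) := by
        refine Finset.sum_congr rfl fun v _ => Finset.sum_congr rfl fun w _ => ?_
        rw [mult_comm' fst snd w v]
        exact if_congr (by omega) rfl rfl

lemma deg_nu (hl : Loopless fst snd) {ord : V → ℤ} (hinj : Function.Injective ord) :
    deg (nu fst snd ord) = (Fintype.card E : ℤ) - (Fintype.card V : ℤ) := by
  have h1 : deg (nu fst snd ord) + deg (nu fst snd (fun w => - ord w))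
      = deg (canonical fst snd) := by
    unfold deg
    rw [← Finset.sum_add_distrib]
    exact Finset.sum_congr rfl fun v _ => nu_add_nu_neg fst snd hl hinj v
  have h2 := deg_nu_eq_deg_nu_neg fst snd hl ord
  have h3 := deg_canonical fst snd hl
  omega

end Nu
section NotEff

set_option linter.unusedSectionVars false
set_option maxHeartbeats 1000000

variable (fst snd : E → V)

lemma adj_symm {v w : V} (h : Adj fst snd v w) : Adj fst snd w v := by
  obtain ⟨e, he⟩ := h; exact ⟨e, he.symm⟩

lemma adj_iff_mult_pos {v w : V} : Adj fst snd v w ↔ 0 < mult fst snd v w := by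
  unfold Adj mult
  rw [Finset.card_pos]
  constructor
  · rintro ⟨e, he⟩; exact ⟨e, by simp [he]⟩
  · rintro ⟨e, he⟩; simp only [mem_filter] at he; exact ⟨e, he.2⟩

/-- ν_ord is never equivalent to an effective divisor. -/
lemma nu_not_eff [Nonempty V] (ord : V → ℤ) (hinj : Function.Injective ord) (f : V → ℤ) :
    ∃ v, nu fst snd ord v - lap fst snd f v < 0 := by
  obtain ⟨v₀, _, hv₀⟩ := Finset.exists_max_image univ f univ_nonempty
  set A := univ.filter (fun v => f v = f v₀) with hA
  have hAne : A.Nonempty := ⟨v₀, by simp [hA]⟩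
  obtain ⟨v, hvA, hvmin⟩ := Finset.exists_min_image A ord hAne
  simp only [hA, mem_filter, mem_univ, true_and] at hvA
  refine ⟨v, ?_⟩
  have hfv : ∀ w, f w ≤ f v := by intro w; rw [hvA]; exact hv₀ w (mem_univ w)
  have hstrict : ∀ w, ord w < ord v → f w < f v := by
    intro w hw
    rcases lt_or_eq_of_le (hfv w) with h|h
    · exact h
    · exfalso
      have hwA : w ∈ A := by simp [hA, h, hvA]
      exact absurd (hvmin w hwA) (by omega)
  have hlap : (∑ w ∈ univ.filter (fun w => ord w < ord v), (mult fst snd v w : ℤ))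
      ≤ lap fst snd f v := by
    unfold lap
    calc (∑ w ∈ univ.filter (fun w => ord w < ord v), (mult fst snd v w : ℤ))
        ≤ ∑ w ∈ univ.filter (fun w => ord w < ord v), (mult fst snd v w : ℤ) * (f v - f w) := by
          apply Finset.sum_le_sum
          intro w hw
          simp only [mem_filter, mem_univ, true_and] at hw
          have h1 : 1 ≤ f v - f w := by have := hstrict w hw; omega
          nlinarith [Int.natCast_nonneg (mult fst snd v w)]
      _ ≤ ∑ w, (mult fst snd v w : ℤ) * (f v - f w) := by
          apply Finset.sum_le_sum_of_subset_of_nonneg (Finset.filter_subset _ _)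
          intro w _ _
          have := hfv w
          nlinarith [Int.natCast_nonneg (mult fst snd v w)]
  unfold nu
  omega

end NotEff

section Dist

set_option linter.unusedSectionVars false
set_option maxHeartbeats 1000000

variable (fst snd : E → V)

/-- Walks of length exactly n, with the step at the end. -/
def walkn (R : V → V → Prop) : ℕ → V → V → Prop
  | 0 => fun v w => v = w
  | n+1 => fun v w => ∃ u, walkn R n v u ∧ R u w

lemma exists_walkn {R : V → V → Prop} {v w : V} (h : Relation.ReflTransGen R v w) :
    ∃ n, walkn R n v w := by
  induction h with
  | refl => exact ⟨0, rfl⟩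
  | tail _ hstep ih => obtain ⟨n, hn⟩ := ih; exact ⟨n+1, _, hn, hstep⟩

variable (q : V)

/-- Graph distance from `q`. -/
noncomputable def gdist (v : V) : ℕ := sInf {n | walkn (Adj fst snd) n q v}

lemma gdist_q : gdist fst snd q q = 0 :=
  Nat.sInf_eq_zero.2 (Or.inl rfl)

lemma gdist_spec (hc : Connected fst snd) (v : V) : walkn (Adj fst snd) (gdist fst snd q v) q v :=
  Nat.sInf_mem (exists_walkn (hc q v))

lemma gdist_eq_zero (hc : Connected fst snd) {v : V} (h : gdist fst snd q v = 0) : v = q := by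
  have := gdist_spec fst snd q hc v
  rw [h] at this
  exact this.symm

lemma gdist_step (hc : Connected fst snd) {v : V} (hv : v ≠ q) :
    ∃ u, Adj fst snd u v ∧ gdist fst snd q u < gdist fst snd q v := by
  rcases hk : gdist fst snd q v with _ | m
  · exact absurd (gdist_eq_zero fst snd q hc hk) hv
  · have hw := gdist_spec fst snd q hc v
    rw [hk] at hw
    obtain ⟨u, hu, hadj⟩ := hw
    refine ⟨u, hadj, ?_⟩
    have : gdist fst snd q u ≤ m := Nat.sInf_le hu
    omega

lemma gdist_adj_le (hc : Connected fst snd) {v w : V} (h : Adj fst snd v w) :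
    gdist fst snd q w ≤ gdist fst snd q v + 1 :=
  Nat.sInf_le ⟨_, gdist_spec fst snd q hc v, h⟩

end Dist
section EffOffQ

set_option linter.unusedSectionVars false
set_option maxHeartbeats 1000000

/-- geometric coefficients for the sweeping argument -/
def cfn (M A : ℤ) (N : ℕ) : ℕ → ℤ := fun k => M * (A+1)^(N+1-k)

def gfn (M A : ℤ) (N : ℕ) : ℕ → ℤ := fun k => ∑ j ∈ Finset.Icc (k+1) N, cfn M A N j

variable {M A : ℤ} {N : ℕ}

lemma cfn_ge_M (hM : 1 ≤ M) (hA : 0 ≤ A) (k : ℕ) : M ≤ cfn M A N k := by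
  unfold cfn
  nlinarith [one_le_pow₀ (show (1:ℤ) ≤ A + 1 by omega) (n := N+1-k)]

lemma cfn_pos (hM : 1 ≤ M) (hA : 0 ≤ A) (k : ℕ) : 0 < cfn M A N k :=
  lt_of_lt_of_le (by omega) (cfn_ge_M hM hA k)

lemma gfn_anti (hM : 1 ≤ M) (hA : 0 ≤ A) {k l : ℕ} (h : k ≤ l) : gfn M A N l ≤ gfn M A N k := by
  apply Finset.sum_le_sum_of_subset_of_nonneg
  · intro j hj; simp only [Finset.mem_Icc] at *; omega
  · intro j _ _; exact (cfn_pos hM hA j).le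

lemma gfn_gap1 (hM : 1 ≤ M) (hA : 0 ≤ A) {k b : ℕ} (hb : b ≤ k + 1) :
    gfn M A N k - gfn M A N b ≤ cfn M A N (k+1) := by
  rcases Nat.lt_or_ge b (k+1) with h|h
  · have h1 := gfn_anti (N := N) hM hA (show b ≤ k by omega)
    have h2 := (cfn_pos (N := N) hM hA (k+1)).le
    omega
  · have hb' : b = k+1 := by omega
    subst hb'
    by_cases hkN : k + 1 ≤ N
    · have hins : Finset.Icc (k+1) N = insert (k+1) (Finset.Icc (k+2) N) := by
        ext j; simp only [Finset.mem_Icc, Finset.mem_insert]; omega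
      have : gfn M A N k = cfn M A N (k+1) + gfn M A N (k+1) := by
        unfold gfn
        rw [hins, Finset.sum_insert (by simp [Finset.mem_Icc])]
      omega
    · have h1 : gfn M A N k = 0 := by
        unfold gfn; rw [Finset.Icc_eq_empty (by omega)]; simp
      have h2 : gfn M A N (k+1) = 0 := by
        unfold gfn; rw [Finset.Icc_eq_empty (by omega)]; simp
      have := (cfn_pos (N := N) hM hA (k+1)).le
      omega

lemma gfn_gap2 (hM : 1 ≤ M) (hA : 0 ≤ A) {k b : ℕ} (hb : b < k) (hk : k ≤ N) :
    cfn M A N k ≤ gfn M A N b - gfn M A N k := by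
  have hsub : Finset.Icc (k+1) N ⊆ Finset.Icc (b+1) N := by
    intro j hj; simp only [Finset.mem_Icc] at *; omega
  have hsd := Finset.sum_sdiff (f := cfn M A N) hsub
  have hmem : k ∈ Finset.Icc (b+1) N \ Finset.Icc (k+1) N := by
    simp only [Finset.mem_sdiff, Finset.mem_Icc]; omega
  have hone : cfn M A N k ≤ ∑ j ∈ Finset.Icc (b+1) N \ Finset.Icc (k+1) N, cfn M A N j :=
    Finset.single_le_sum (fun j _ => (cfn_pos hM hA j).le) hmem
  unfold gfn
  omega

lemma cfn_rec (hM : 1 ≤ M) (hA : 0 ≤ A) {k : ℕ} (hk : k ≤ N) :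
    A * cfn M A N (k+1) + M ≤ cfn M A N k := by
  have h1 : N + 1 - k = (N - k) + 1 := by omega
  have h2 : N + 1 - (k+1) = N - k := by omega
  have h3 : cfn M A N k = cfn M A N (k+1) * (A+1) := by
    unfold cfn; rw [h1, h2, pow_succ]; ring
  have h4 := cfn_ge_M (N := N) hM hA (k+1)
  nlinarith [cfn_pos (N := N) hM hA (k+1)]

variable (fst snd : E → V)

lemma exists_eff_off (hc : Connected fst snd) (q : V) (D : V → ℤ) :
    ∃ f : V → ℤ, ∀ v, v ≠ q → 0 ≤ D v - lap fst snd f v := by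
  classical
  set N := univ.sup (gdist fst snd q) with hN
  set A : ℤ := ∑ u, (valence fst snd u : ℤ) with hA
  have hA0 : 0 ≤ A := Finset.sum_nonneg fun u _ => Int.natCast_nonneg _
  set M : ℤ := 1 + ∑ u, |D u| with hM
  have hM1 : 1 ≤ M := by
    have : 0 ≤ ∑ u, |D u| := Finset.sum_nonneg fun u _ => abs_nonneg _
    omega
  have hMD : ∀ v, -M ≤ D v := by
    intro v
    have h1 : |D v| ≤ ∑ u, |D u| :=
      Finset.single_le_sum (fun u _ => abs_nonneg (D u)) (mem_univ v)
    have := abs_nonneg (D v)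
    have := neg_abs_le (D v)
    omega
  refine ⟨fun v => gfn M A N (gdist fst snd q v), ?_⟩
  intro v hv
  set k := gdist fst snd q v with hk
  have hk1 : 1 ≤ k := by
    rcases Nat.eq_zero_or_pos k with h|h
    · rw [hk] at h
      exact absurd (gdist_eq_zero fst snd q hc h) hv
    · omega
  have hkN : k ≤ N := by
    rw [hk, hN]
    exact Finset.le_sup (f := gdist fst snd q) (mem_univ v)
  obtain ⟨u₀, hadj, hu₀⟩ := gdist_step fst snd q hc hv
  have hm₀ : 1 ≤ (mult fst snd v u₀ : ℤ) := by
    have := (adj_iff_mult_pos fst snd).1 (adj_symm fst snd hadj)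
    exact_mod_cast this
  have hbound : lap fst snd (fun v => gfn M A N (gdist fst snd q v)) v ≤ -M := by
    show (∑ w, (mult fst snd v w : ℤ) * (gfn M A N (gdist fst snd q v) - gfn M A N (gdist fst snd q w))) ≤ -M
    rw [← hk]
    rw [← Finset.add_sum_erase univ _ (mem_univ u₀)]
    have hterm0 : (mult fst snd v u₀ : ℤ) * (gfn M A N k - gfn M A N (gdist fst snd q u₀))
        ≤ - cfn M A N k := by
      rw [← hk] at hu₀
      have hg2 := gfn_gap2 (N := N) hM1 hA0 hu₀ hkN
      have hcp := cfn_pos (M := M) (A := A) (N := N) hM1 hA0 k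
      nlinarith [hg2, hm₀, hcp]
    have hrest : (∑ w ∈ univ.erase u₀,
        (mult fst snd v w : ℤ) * (gfn M A N k - gfn M A N (gdist fst snd q w)))
        ≤ A * cfn M A N (k+1) := by
      calc (∑ w ∈ univ.erase u₀,
            (mult fst snd v w : ℤ) * (gfn M A N k - gfn M A N (gdist fst snd q w)))
          ≤ ∑ w ∈ univ.erase u₀, (mult fst snd v w : ℤ) * cfn M A N (k+1) := by
            apply Finset.sum_le_sum
            intro w _
            rcases Nat.eq_zero_or_pos (mult fst snd v w) with h|h
            · simp [h]
            · have hadjw : Adj fst snd v w := (adj_iff_mult_pos fst snd).2 h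
              have hdw : gdist fst snd q w ≤ k + 1 := by
                rw [hk]; exact gdist_adj_le fst snd q hc hadjw
              have hg1 := gfn_gap1 (N := N) hM1 hA0 hdw
              have hmnn : (0:ℤ) ≤ (mult fst snd v w : ℤ) := Int.natCast_nonneg _
              nlinarith
        _ ≤ ∑ w, (mult fst snd v w : ℤ) * cfn M A N (k+1) := by
            apply Finset.sum_le_sum_of_subset_of_nonneg (Finset.erase_subset _ _)
            intro w _ _
            exact mul_nonneg (Int.natCast_nonneg _) (cfn_pos hM1 hA0 _).le
        _ = (valence fst snd v : ℤ) * cfn M A N (k+1) := by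
            rw [← Finset.sum_mul]
            congr 1
            simp [valence]
        _ ≤ A * cfn M A N (k+1) := by
            apply mul_le_mul_of_nonneg_right _ (cfn_pos hM1 hA0 _).le
            rw [hA]
            exact Finset.single_le_sum (fun u (_ : u ∈ univ) => Int.natCast_nonneg (valence fst snd u)) (mem_univ v)
    have hrec := cfn_rec (N := N) hM1 hA0 hkN
    omega
  have := hMD v
  omega

end EffOffQ
section Extremal

set_option linter.unusedSectionVars false
set_option maxHeartbeats 1000000

variable (fst snd : E → V)

/-- Number of edges from `v` into the set `S`. -/
def edgesTo (v : V) (S : Finset V) : ℤ := ∑ w ∈ S, (mult fst snd v w : ℤ)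

lemma edgesTo_nonneg (v : V) (S : Finset V) : 0 ≤ edgesTo fst snd v S :=
  Finset.sum_nonneg fun w _ => Int.natCast_nonneg _

/-- Indicator of a finite set as an integer-valued function. -/
def indS (S : Finset V) : V → ℤ := fun v => if v ∈ S then 1 else 0

lemma lap_indS_mem {S : Finset V} {v : V} (hv : v ∈ S) :
    lap fst snd (indS S) v = edgesTo fst snd v Sᶜ := by
  unfold lap edgesTo
  calc (∑ w, (mult fst snd v w : ℤ) * (indS S v - indS S w))
      = ∑ w, (if w ∈ Sᶜ then (mult fst snd v w : ℤ) else 0) := by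
        apply Finset.sum_congr rfl
        intro w _
        by_cases hw : w ∈ S <;> simp [indS, hv, hw]
    _ = ∑ w ∈ Sᶜ, (mult fst snd v w : ℤ) := by
        rw [Finset.sum_ite_mem, Finset.univ_inter]

lemma lap_indS_not_mem {S : Finset V} {v : V} (hv : v ∉ S) :
    lap fst snd (indS S) v = - edgesTo fst snd v S := by
  unfold lap edgesTo
  calc (∑ w, (mult fst snd v w : ℤ) * (indS S v - indS S w))
      = ∑ w, -(if w ∈ S then (mult fst snd v w : ℤ) else 0) := by
        apply Finset.sum_congr rfl
        intro w _
        by_cases hw : w ∈ S <;> simp [indS, hv, hw]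
    _ = - ∑ w ∈ S, (mult fst snd v w : ℤ) := by
        rw [Finset.sum_neg_distrib, Finset.sum_ite_mem, Finset.univ_inter]

/-- Swap helper. -/
lemma sum_swap_mult (F : V → V → ℤ) :
    ∑ v, ∑ w, (mult fst snd v w : ℤ) * F v w = ∑ v, ∑ w, (mult fst snd v w : ℤ) * F w v := by
  calc ∑ v, ∑ w, (mult fst snd v w : ℤ) * F v w
      = ∑ w, ∑ v, (mult fst snd v w : ℤ) * F v w := Finset.sum_comm
    _ = ∑ v, ∑ w, (mult fst snd v w : ℤ) * F w v := by
        refine Finset.sum_congr rfl fun v _ => Finset.sum_congr rfl fun w _ => ?_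
        rw [mult_comm' fst snd w v]

/-- The weighted change under firing a set. -/
lemma weighted_lap_indS (S : Finset V) (wt : V → ℤ) :
    ∑ v, wt v * lap fst snd (indS S) v
    = ∑ v, ∑ w, (if v ∈ S ∧ w ∉ S then (mult fst snd v w : ℤ) * (wt v - wt w) else 0) := by
  have lhs_eq : ∑ v, wt v * lap fst snd (indS S) v
      = ∑ v, ∑ w, (mult fst snd v w : ℤ) * (wt v * (indS S v - indS S w)) := by
    apply Finset.sum_congr rfl; intro v _
    rw [lap, Finset.mul_sum]
    apply Finset.sum_congr rfl; intro w _
    ring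
  have swap := sum_swap_mult fst snd (fun v w => wt v * (indS S v - indS S w))
  have two_eq : (2:ℤ) * (∑ v, wt v * lap fst snd (indS S) v)
      = ∑ v, ∑ w, (mult fst snd v w : ℤ) * ((wt v - wt w) * (indS S v - indS S w)) := by
    rw [two_mul]
    rw [lhs_eq]
    nth_rewrite 2 [swap]
    rw [← Finset.sum_add_distrib]
    apply Finset.sum_congr rfl; intro v _
    rw [← Finset.sum_add_distrib]
    apply Finset.sum_congr rfl; intro w _
    ring
  have rhs_two : ∑ v, ∑ w, (mult fst snd v w : ℤ) * ((wt v - wt w) * (indS S v - indS S w))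
      = 2 * ∑ v, ∑ w, (if v ∈ S ∧ w ∉ S then (mult fst snd v w : ℤ) * (wt v - wt w) else 0) := by
    have point : ∀ v w : V, (mult fst snd v w : ℤ) * ((wt v - wt w) * (indS S v - indS S w))
        = (if v ∈ S ∧ w ∉ S then (mult fst snd v w : ℤ) * (wt v - wt w) else 0)
          + (mult fst snd v w : ℤ) * (if w ∈ S ∧ v ∉ S then wt w - wt v else 0) := by
      intro v w
      by_cases hv : v ∈ S <;> by_cases hw : w ∈ S <;> simp [indS, hv, hw] <;> ring
    have hsw := sum_swap_mult fst snd (fun v w => if w ∈ S ∧ v ∉ S then wt w - wt v else 0)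
    calc ∑ v, ∑ w, (mult fst snd v w : ℤ) * ((wt v - wt w) * (indS S v - indS S w))
        = (∑ v, ∑ w, (if v ∈ S ∧ w ∉ S then (mult fst snd v w : ℤ) * (wt v - wt w) else 0))
          + ∑ v, ∑ w, (mult fst snd v w : ℤ) * (if w ∈ S ∧ v ∉ S then wt w - wt v else 0) := by
          rw [← Finset.sum_add_distrib]
          apply Finset.sum_congr rfl; intro v _
          rw [← Finset.sum_add_distrib]
          exact Finset.sum_congr rfl fun w _ => point v w
      _ = (∑ v, ∑ w, (if v ∈ S ∧ w ∉ S then (mult fst snd v w : ℤ) * (wt v - wt w) else 0))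
          + ∑ v, ∑ w, (mult fst snd v w : ℤ) * (if v ∈ S ∧ w ∉ S then wt v - wt w else 0) := by
          rw [hsw]
      _ = 2 * ∑ v, ∑ w, (if v ∈ S ∧ w ∉ S then (mult fst snd v w : ℤ) * (wt v - wt w) else 0) := by
          rw [two_mul]
          congr 1
          refine Finset.sum_congr rfl fun v _ => Finset.sum_congr rfl fun w _ => ?_
          by_cases h : v ∈ S ∧ w ∉ S <;> simp [h]
  have := two_eq.trans rhs_two
  omega

end Extremal
section Burnable

set_option linter.unusedSectionVars false
set_option maxHeartbeats 2000000

variable (fst snd : E → V)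

lemma lap_add (f g : V → ℤ) (v : V) :
    lap fst snd (f + g) v = lap fst snd f v + lap fst snd g v :=
  congrFun ((lapHom fst snd).map_add f g) v

lemma exists_burnable (hc : Connected fst snd) (q : V) (D : V → ℤ) :
    ∃ f : V → ℤ, (∀ v, v ≠ q → 0 ≤ D v - lap fst snd f v) ∧
      ∀ S : Finset V, q ∉ S → S.Nonempty →
        ∃ v ∈ S, D v - lap fst snd f v < edgesTo fst snd v Sᶜ := by
  classical
  set A : ℤ := ∑ u, (valence fst snd u : ℤ) with hA
  have hA0 : 0 ≤ A := Finset.sum_nonneg fun u _ => Int.natCast_nonneg _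
  set B : ℤ := A + 2 with hB
  have hB1 : 1 ≤ B := by omega
  set N := univ.sup (gdist fst snd q) with hN
  set wt : V → ℤ := fun v => B ^ (N - gdist fst snd q v) with hwt
  have hwt_pos : ∀ v, 0 < wt v := fun v => pow_pos (by omega) _
  -- property of candidate functions
  set Pf : (V → ℤ) → Prop := fun f => ∀ v, v ≠ q → 0 ≤ D v - lap fst snd f v with hPf
  have sum_split : ∀ f : V → ℤ, deg D = (D q - lap fst snd f q)
      + ∑ v ∈ univ.erase q, (D v - lap fst snd f v) := by
    intro f
    have h1 : deg (D - lap fst snd f) = deg D := by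
      rw [deg_sub, deg_lap]; ring
    have h2 : deg (D - lap fst snd f)
        = (D q - lap fst snd f q) + ∑ v ∈ univ.erase q, (D v - lap fst snd f v) := by
      rw [deg, ← Finset.add_sum_erase univ _ (mem_univ q)]
      rfl
    omega
  -- Stage 1 : maximize the value at q
  obtain ⟨x₀, ⟨f₀, hf₀, hx₀⟩, hx₀max⟩ :=
    Int.exists_greatest_of_bdd (P := fun x => ∃ f, Pf f ∧ x = D q - lap fst snd f q)
      (⟨deg D, by
        rintro x ⟨f, hPff, rfl⟩
        have h := sum_split f
        have h2 : 0 ≤ ∑ v ∈ univ.erase q, (D v - lap fst snd f v) :=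
          Finset.sum_nonneg fun v hv => hPff v (Finset.ne_of_mem_erase hv)
        omega⟩)
      (by
        obtain ⟨f, hf⟩ := exists_eff_off fst snd hc q D
        exact ⟨D q - lap fst snd f q, f, hf, rfl⟩)
  -- Stage 2 : maximize the weighted sum away from q
  obtain ⟨y₀, ⟨f₁, hPf₁, hq₁, hy₁⟩, hy₀max⟩ :=
    Int.exists_greatest_of_bdd (P := fun y => ∃ f, Pf f ∧ D q - lap fst snd f q = x₀ ∧
        y = ∑ v ∈ univ.erase q, wt v * (D v - lap fst snd f v))
      (⟨∑ v ∈ univ.erase q, wt v * (deg D - x₀), by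
        rintro y ⟨f, hPff, hqf, rfl⟩
        apply Finset.sum_le_sum
        intro v hv
        have hxv : D v - lap fst snd f v ≤ deg D - x₀ := by
          have h := sum_split f
          have h2 : D v - lap fst snd f v ≤ ∑ u ∈ univ.erase q, (D u - lap fst snd f u) :=
            Finset.single_le_sum (fun u hu => hPff u (Finset.ne_of_mem_erase hu)) hv
          omega
        exact mul_le_mul_of_nonneg_left hxv (hwt_pos v).le⟩)
      ⟨_, f₀, hf₀, hx₀.symm, rfl⟩
  refine ⟨f₁, hPf₁, ?_⟩
  intro S hqS hSne
  by_contra hstuck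
  push_neg at hstuck
  -- fire the set S
  set f' := f₁ + indS S with hf'
  have hlapf' : ∀ v, lap fst snd f' v = lap fst snd f₁ v + lap fst snd (indS S) v :=
    fun v => lap_add fst snd f₁ (indS S) v
  have hPf' : Pf f' := by
    intro v hv
    rw [hlapf']
    by_cases hvS : v ∈ S
    · rw [lap_indS_mem fst snd hvS]
      have := hstuck v hvS
      omega
    · rw [lap_indS_not_mem fst snd hvS]
      have h1 := hPf₁ v hv
      have h2 := edgesTo_nonneg fst snd v S
      omega
  have hq' : D q - lap fst snd f' q = x₀ + edgesTo fst snd q S := by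
    rw [hlapf', lap_indS_not_mem fst snd hqS]
    omega
  have hq0 : edgesTo fst snd q S = 0 := by
    have h1 := hx₀max (D q - lap fst snd f' q) ⟨f', hPf', rfl⟩
    have h2 := edgesTo_nonneg fst snd q S
    omega
  have hq'' : D q - lap fst snd f' q = x₀ := by omega
  -- the weighted sum strictly increases : contradiction
  have hy' := hy₀max (∑ v ∈ univ.erase q, wt v * (D v - lap fst snd f' v))
    ⟨f', hPf', hq'', rfl⟩
  -- compute the change in the weighted sum
  have hlapq : lap fst snd (indS S) q = 0 := by
    rw [lap_indS_not_mem fst snd hqS, hq0]; ring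
  have hchange : ∑ v ∈ univ.erase q, wt v * (D v - lap fst snd f' v)
      = (∑ v ∈ univ.erase q, wt v * (D v - lap fst snd f₁ v))
        - ∑ v, wt v * lap fst snd (indS S) v := by
    have hfull : ∑ v, wt v * lap fst snd (indS S) v
        = ∑ v ∈ univ.erase q, wt v * lap fst snd (indS S) v := by
      rw [← Finset.add_sum_erase univ _ (mem_univ q), hlapq]
      ring
    rw [hfull, ← Finset.sum_sub_distrib]
    apply Finset.sum_congr rfl
    intro v _
    rw [hlapf']
    ring
  -- show the firing term is negative
  have hneg : ∑ v, wt v * lap fst snd (indS S) v < 0 := by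
    rw [weighted_lap_indS]
    -- pick the vertex of S closest to q, and its closer neighbour
    obtain ⟨vs, hvsS, hvsmin⟩ := Finset.exists_min_image S (gdist fst snd q) hSne
    set k := gdist fst snd q vs with hk
    have hvsq : vs ≠ q := fun h => hqS (h ▸ hvsS)
    have hk1 : 1 ≤ k := by
      rcases Nat.eq_zero_or_pos k with h|h
      · rw [hk] at h; exact absurd (gdist_eq_zero fst snd q hc h) hvsq
      · omega
    have hkN : k ≤ N := by
      rw [hk, hN]; exact Finset.le_sup (f := gdist fst snd q) (mem_univ vs)
    obtain ⟨us, hadj, hus⟩ := gdist_step fst snd q hc hvsq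
    rw [← hk] at hus
    have husS : us ∉ S := fun h => absurd (hvsmin us h) (by omega)
    have hms : 1 ≤ (mult fst snd vs us : ℤ) := by
      have := (adj_iff_mult_pos fst snd).1 (adj_symm fst snd hadj)
      exact_mod_cast this
    -- rewrite double sum as a sum over the product
    have hprod : (∑ v, ∑ w, (if v ∈ S ∧ w ∉ S then (mult fst snd v w : ℤ) * (wt v - wt w) else 0))
        = ∑ p ∈ univ ×ˢ univ,
          (if p.1 ∈ S ∧ p.2 ∉ S then (mult fst snd p.1 p.2 : ℤ) * (wt p.1 - wt p.2) else 0) := by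
      rw [Finset.sum_product]
    rw [hprod]
    have hmem : (vs, us) ∈ (univ ×ˢ univ : Finset (V × V)) := by
      simp [Finset.mem_product]
    rw [← Finset.add_sum_erase _ _ hmem]
    show (if vs ∈ S ∧ us ∉ S then (mult fst snd vs us : ℤ) * (wt vs - wt us) else 0)
        + (∑ p ∈ (univ ×ˢ univ : Finset (V × V)).erase (vs, us),
          (if p.1 ∈ S ∧ p.2 ∉ S then (mult fst snd p.1 p.2 : ℤ) * (wt p.1 - wt p.2) else 0)) < 0
    -- bound the main term
    have hwtvs : wt vs = B ^ (N - k) := by rw [hwt]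
    have hwtus : B ^ (N - k + 1) ≤ wt us := by
      rw [hwt]
      apply pow_le_pow_right₀ hB1
      omega
    have hmain : (if vs ∈ S ∧ us ∉ S then (mult fst snd vs us : ℤ) * (wt vs - wt us) else 0)
        ≤ B ^ (N - k) - B ^ (N - k + 1) := by
      rw [if_pos ⟨hvsS, husS⟩]
      have h1 : wt vs - wt us ≤ B ^ (N - k) - B ^ (N - k + 1) := by omega
      have h2 : wt vs - wt us ≤ 0 := by
        have : B ^ (N - k) ≤ B ^ (N - k + 1) := pow_le_pow_right₀ hB1 (by omega)
        omega
      nlinarith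
    -- bound the rest
    have hub : ∀ p : V × V,
        (if p.1 ∈ S ∧ p.2 ∉ S then (mult fst snd p.1 p.2 : ℤ) * (wt p.1 - wt p.2) else 0)
        ≤ (mult fst snd p.1 p.2 : ℤ) * B ^ (N - k) := by
      rintro ⟨v, w⟩
      by_cases h : v ∈ S ∧ w ∉ S
      · rw [if_pos h]
        have hdv : k ≤ gdist fst snd q v := hvsmin v h.1
        have hwv : wt v ≤ B ^ (N - k) := by
          rw [hwt]
          exact pow_le_pow_right₀ hB1 (by omega)
        have h2 := hwt_pos w
        have h3 : (0:ℤ) ≤ (mult fst snd v w : ℤ) := Int.natCast_nonneg _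
        nlinarith
      · rw [if_neg h]
        positivity
    have hrest : (∑ p ∈ (univ ×ˢ univ : Finset (V × V)).erase (vs, us),
          (if p.1 ∈ S ∧ p.2 ∉ S then (mult fst snd p.1 p.2 : ℤ) * (wt p.1 - wt p.2) else 0))
        ≤ A * B ^ (N - k) := by
      calc (∑ p ∈ (univ ×ˢ univ : Finset (V × V)).erase (vs, us),
            (if p.1 ∈ S ∧ p.2 ∉ S then (mult fst snd p.1 p.2 : ℤ) * (wt p.1 - wt p.2) else 0))
          ≤ ∑ p ∈ (univ ×ˢ univ : Finset (V × V)).erase (vs, us),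
            (mult fst snd p.1 p.2 : ℤ) * B ^ (N - k) := Finset.sum_le_sum fun p _ => hub p
        _ ≤ ∑ p ∈ (univ ×ˢ univ : Finset (V × V)),
            (mult fst snd p.1 p.2 : ℤ) * B ^ (N - k) := by
            apply Finset.sum_le_sum_of_subset_of_nonneg (Finset.erase_subset _ _)
            intro p _ _
            positivity
        _ = A * B ^ (N - k) := by
            rw [Finset.sum_product]
            have hrow : ∀ v : V, (∑ w, (mult fst snd v w : ℤ) * B ^ (N - k))
                = (valence fst snd v : ℤ) * B ^ (N - k) := by
              intro v
              rw [← Finset.sum_mul]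
              congr 1
              simp [valence]
            rw [Finset.sum_congr rfl (fun v _ => hrow v), ← Finset.sum_mul, hA]
    have hpow : B ^ (N - k + 1) = B * B ^ (N - k) := by rw [pow_succ]; ring
    have hpos : 0 < B ^ (N - k) := pow_pos (by omega) _
    have : (if vs ∈ S ∧ us ∉ S then (mult fst snd vs us : ℤ) * (wt vs - wt us) else 0)
        + (∑ p ∈ (univ ×ˢ univ : Finset (V × V)).erase (vs, us),
          (if p.1 ∈ S ∧ p.2 ∉ S then (mult fst snd p.1 p.2 : ℤ) * (wt p.1 - wt p.2) else 0))
        ≤ B ^ (N - k) - B ^ (N - k + 1) + A * B ^ (N - k) := by omega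
    have hfinal : B ^ (N - k) - B ^ (N - k + 1) + A * B ^ (N - k) < 0 := by
      rw [hpow, hB]
      nlinarith
    omega
  omega

end Burnable
section Burning

set_option linter.unusedSectionVars false
set_option maxHeartbeats 2000000

variable (fst snd : E → V)

lemma mem_take_iff_idxOf {l : List V} (hnd : l.Nodup) {w : V} (i : ℕ) (hw : w ∈ l) :
    w ∈ l.take i ↔ l.idxOf w < i := by
  constructor
  · intro h
    obtain ⟨j, hj, hjw⟩ := List.mem_take_iff_getElem.1 h
    have hjl : j < l.length := lt_of_lt_of_le hj (min_le_right _ _)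
    have : l.idxOf w = j := by
      have h2 := List.get_idxOf hnd ⟨j, hjl⟩
      simp only [List.get_eq_getElem] at h2
      rw [hjw] at h2
      exact h2
    have := lt_of_lt_of_le hj (min_le_left _ _)
    omega
  · intro h
    have hlt : l.idxOf w < l.length := List.idxOf_lt_length_iff.2 hw
    refine List.mem_take_iff_getElem.2 ⟨l.idxOf w, lt_min h hlt, ?_⟩
    have := List.idxOf_get hlt
    simpa using this

lemma burn_list (D₁ : V → ℤ) :
    ∀ (n : ℕ) (U : Finset V), U.card = n →
    (∀ S : Finset V, S ⊆ U → S.Nonempty → ∃ v ∈ S, D₁ v < edgesTo fst snd v Sᶜ) →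
    ∃ L : List V, L.Nodup ∧ (∀ v, v ∈ L ↔ v ∈ U) ∧
      ∀ (i : ℕ) (hi : i < L.length),
        D₁ L[i] < edgesTo fst snd L[i] (Uᶜ ∪ (L.take i).toFinset) := by
  intro n
  induction n with
  | zero =>
      intro U hU _
      have hUe : U = ∅ := Finset.card_eq_zero.1 hU
      refine ⟨[], by simp, by simp [hUe], by simp⟩
  | succ n ih =>
      intro U hU H
      have hUne : U.Nonempty := by rw [← Finset.card_pos, hU]; omega
      obtain ⟨v₀, hv₀U, hv₀⟩ := H U (subset_refl U) hUne
      have hcard : (U.erase v₀).card = n := by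
        rw [Finset.card_erase_of_mem hv₀U, hU]; omega
      have H' : ∀ S : Finset V, S ⊆ U.erase v₀ → S.Nonempty →
          ∃ v ∈ S, D₁ v < edgesTo fst snd v Sᶜ :=
        fun S hS => H S (hS.trans (Finset.erase_subset _ _))
      obtain ⟨L', hnd', hmem', hprop'⟩ := ih (U.erase v₀) hcard H'
      refine ⟨v₀ :: L', ?_, ?_, ?_⟩
      · rw [List.nodup_cons]
        exact ⟨fun h => (Finset.notMem_erase v₀ U) ((hmem' v₀).1 h), hnd'⟩
      · intro v
        rw [List.mem_cons, hmem', Finset.mem_erase]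
        constructor
        · rintro (rfl | ⟨_, h⟩)
          · exact hv₀U
          · exact h
        · intro hv
          rcases eq_or_ne v v₀ with h|h
          · exact Or.inl h
          · exact Or.inr ⟨h, hv⟩
      · intro i hi
        match i with
        | 0 =>
            simp only [List.getElem_cons_zero, List.take_zero, List.toFinset_nil,
              Finset.union_empty]
            exact hv₀
        | Nat.succ j =>
            have hj : j < L'.length := by
              simp only [List.length_cons] at hi
              omega
            have hstep := hprop' j hj
            have hset : ((U.erase v₀)ᶜ ∪ (L'.take j).toFinset)
                = (Uᶜ ∪ ((v₀ :: L').take (j+1)).toFinset) := by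
              rw [List.take_succ_cons, List.toFinset_cons, Finset.compl_erase]
              ext x
              simp only [Finset.mem_union, Finset.mem_insert]
              tauto
            rw [hset] at hstep
            simpa only [List.getElem_cons_succ] using hstep

end Burning
section Dichotomy

set_option linter.unusedSectionVars false
set_option maxHeartbeats 2000000

variable (fst snd : E → V)

lemma exists_dominated_by_nu [Nonempty V] (hc : Connected fst snd)
    (D : V → ℤ) (hneff : ∀ f : V → ℤ, ∃ v, D v - lap fst snd f v < 0) :
    ∃ (ord : V → ℤ) (f : V → ℤ), Function.Injective ord ∧
      ∀ v, D v - lap fst snd f v ≤ nu fst snd ord v := by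
  classical
  obtain ⟨q⟩ := ‹Nonempty V›
  obtain ⟨f, hPf, hburn⟩ := exists_burnable fst snd hc q D
  have H : ∀ S : Finset V, S ⊆ univ.erase q → S.Nonempty →
      ∃ v ∈ S, D v - lap fst snd f v < edgesTo fst snd v Sᶜ := by
    intro S hS hne
    have hqS : q ∉ S := fun h => (Finset.mem_erase.1 (hS h)).1 rfl
    exact hburn S hqS hne
  obtain ⟨L, hnd, hmem, hprop⟩ :=
    burn_list fst snd (fun v => D v - lap fst snd f v) (univ.erase q).card (univ.erase q) rfl H
  set L₀ := q :: L with hL₀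
  have hqL : q ∉ L := fun h => (Finset.mem_erase.1 ((hmem q).1 h)).1 rfl
  have hnd₀ : L₀.Nodup := List.nodup_cons.2 ⟨hqL, hnd⟩
  have hcomp : ∀ v : V, v ∈ L₀ := by
    intro v
    rcases eq_or_ne v q with rfl|h
    · exact List.mem_cons_self
    · exact List.mem_cons_of_mem _ ((hmem v).2 (Finset.mem_erase.2 ⟨h, mem_univ v⟩))
  set ord : V → ℤ := fun v => (L₀.idxOf v : ℤ) with hord
  have hordq : ord q = 0 := by
    simp [hord, hL₀, List.idxOf_cons_self]
  have hinj : Function.Injective ord := by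
    intro v w h
    have hv : L₀.idxOf v < L₀.length := List.idxOf_lt_length_iff.2 (hcomp v)
    have hw : L₀.idxOf w < L₀.length := List.idxOf_lt_length_iff.2 (hcomp w)
    have hvw : L₀.idxOf v = L₀.idxOf w := by
      have : (L₀.idxOf v : ℤ) = (L₀.idxOf w : ℤ) := h
      exact_mod_cast this
    have h1 := List.idxOf_get hv
    have h2 := List.idxOf_get hw
    rw [← h1, ← h2]
    congr 1
    exact Fin.ext hvw
  refine ⟨ord, f, hinj, ?_⟩
  intro v
  rcases eq_or_ne v q with rfl|hvq
  · have hfilter : univ.filter (fun w => ord w < ord v) = ∅ := by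
      apply Finset.filter_eq_empty_iff.2
      intro w _
      rw [hordq, hord]
      simp only [not_lt]
      exact Int.natCast_nonneg _
    have hnu : nu fst snd ord v = -1 := by
      unfold nu; rw [hfilter]; simp
    obtain ⟨v₁, hv₁⟩ := hneff f
    have hv₁q : v₁ = v := by
      by_contra h
      exact absurd (hPf v₁ h) (by omega)
    rw [hv₁q] at hv₁
    omega
  · have hvL : v ∈ L := ((hmem v).2 (Finset.mem_erase.2 ⟨hvq, mem_univ v⟩))
    have hiL : L.idxOf v < L.length := List.idxOf_lt_length_iff.2 hvL
    set i := L.idxOf v with hi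
    have hgetv : L[i] = v := by
      have h := List.idxOf_get hiL
      exact (List.get_eq_getElem (l := L) (i := ⟨i, hiL⟩)).symm.trans h
    have hstep := hprop i hiL
    rw [hgetv] at hstep
    have hordv : ord v = (i : ℤ) + 1 := by
      rw [hord]
      simp only [hL₀, List.idxOf_cons_ne L hvq.symm, hi]
      push_cast
      ring
    have hordw : ∀ w, w ≠ q → ord w = (L.idxOf w : ℤ) + 1 := by
      intro w hwq
      rw [hord]
      simp only [hL₀, List.idxOf_cons_ne L hwq.symm]
      push_cast
      ring
    have hfilter : univ.filter (fun w => ord w < ord v)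
        = {q} ∪ (L.take i).toFinset := by
      ext w
      simp only [Finset.mem_filter, mem_univ, true_and, Finset.mem_union,
        Finset.mem_singleton, List.mem_toFinset]
      rw [hordv]
      rcases eq_or_ne w q with rfl|hwq
      · rw [hordq]
        simp only [true_or, iff_true]
        positivity
      · have hwL : w ∈ L := ((hmem w).2 (Finset.mem_erase.2 ⟨hwq, mem_univ w⟩))
        rw [hordw w hwq, mem_take_iff_idxOf hnd i hwL]
        constructor
        · intro h
          right
          exact_mod_cast (by omega : (L.idxOf w : ℤ) < (i : ℤ))
        · rintro (rfl|h)
          · exact absurd rfl hwq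
          · have : (L.idxOf w : ℤ) < (i : ℤ) := by exact_mod_cast h
            omega
    have hsets : ((univ.erase q)ᶜ ∪ (L.take i).toFinset) = {q} ∪ (L.take i).toFinset := by
      rw [Finset.compl_erase, Finset.compl_univ]
      ext x
      simp
    rw [hsets] at hstep
    have hnu : nu fst snd ord v = edgesTo fst snd v ({q} ∪ (L.take i).toFinset) - 1 := by
      unfold nu
      rw [hfilter]
      rfl
    omega

end Dichotomy
section RankChar

set_option linter.unusedSectionVars false
set_option maxHeartbeats 2000000

variable (fst snd : E → V)

lemma lap_sub (f g : V → ℤ) (v : V) :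
    lap fst snd (f - g) v = lap fst snd f v - lap fst snd g v :=
  congrFun ((lapHom fst snd).map_sub f g) v

/-- The minimizing set for the Baker–Norine rank formula. -/
def mSet (D : V → ℤ) : Set ℕ :=
  {n : ℕ | ∃ (ord f : V → ℤ), Function.Injective ord ∧
    degp (fun v => D v - lap fst snd f v - nu fst snd ord v) = (n : ℤ)}

noncomputable def mval (D : V → ℤ) : ℕ := sInf (mSet fst snd D)

lemma mSet_nonempty [Nonempty V] (D : V → ℤ) : (mSet fst snd D).Nonempty := by
  classical
  set ord : V → ℤ := fun v => ((Fintype.equivFin V v : ℕ) : ℤ) with hord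
  have hinj : Function.Injective ord := by
    intro v w h
    have h2 : ((Fintype.equivFin V v : ℕ) : ℤ) = ((Fintype.equivFin V w : ℕ) : ℤ) := h
    have h3 : (Fintype.equivFin V v : ℕ) = (Fintype.equivFin V w : ℕ) := by exact_mod_cast h2
    exact (Fintype.equivFin V).injective (Fin.ext h3)
  refine ⟨(degp (fun v => D v - lap fst snd 0 v - nu fst snd ord v)).toNat, ord, 0, hinj, ?_⟩
  rw [Int.toNat_of_nonneg (degp_nonneg _)]

lemma mval_mem [Nonempty V] (D : V → ℤ) : mval fst snd D ∈ mSet fst snd D :=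
  Nat.sInf_mem (mSet_nonempty fst snd D)

lemma mval_le [Nonempty V] (D : V → ℤ) {n : ℕ} (h : n ∈ mSet fst snd D) :
    mval fst snd D ≤ n := Nat.sInf_le h

/-- Key equivalence : `rankGe D r ↔ r < mval D`. -/
lemma rankGe_iff [Nonempty V] (hc : Connected fst snd) (D : V → ℤ) (r : ℕ) :
    rankGe fst snd D r ↔ (r : ℤ) < (mval fst snd D : ℤ) := by
  classical
  constructor
  · -- rankGe → r < mval
    intro hrank
    by_contra hle
    push_neg at hle
    obtain ⟨ord, f, hinj, hdegp⟩ := mval_mem fst snd D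
    set m := mval fst snd D with hm
    set x : V → ℤ := fun v => D v - lap fst snd f v - nu fst snd ord v with hx
    have hmr : (m : ℤ) ≤ (r : ℤ) := hle
    obtain ⟨vb⟩ := ‹Nonempty V›
    set pad : V → ℤ := fun v => if v = vb then (r : ℤ) - (m : ℤ) else 0 with hpaddef
    have hpad_nonneg : ∀ v, 0 ≤ pad v := by
      intro v
      rw [hpaddef]
      by_cases h : v = vb <;> simp [h] <;> omega
    have hpad_sum : ∑ v, pad v = (r : ℤ) - (m : ℤ) := by
      rw [hpaddef, Finset.sum_ite_eq' univ vb (fun _ => (r : ℤ) - (m : ℤ))]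
      simp
    set Ediv : V → ℤ := fun v => max (x v) 0 + pad v with hEdiv
    have hEeff : Effective Ediv :=
      fun v => add_nonneg (le_max_right _ _) (hpad_nonneg v)
    have hEdeg : deg Ediv = (r : ℤ) := by
      have h1 : deg Ediv = (∑ v, max (x v) 0) + ∑ v, pad v := by
        rw [deg, ← Finset.sum_add_distrib]
      have h2 : (∑ v, max (x v) 0) = (m : ℤ) := hdegp
      rw [h1, h2, hpad_sum]
      ring
    obtain ⟨D', hD'eff, g, hg⟩ := hrank Ediv hEeff hEdeg
    have hkey : ∀ v, nu fst snd ord v - lap fst snd (g - f) v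
        = D' v + (max (x v) 0 - x v) + pad v := by
      intro v
      have hgv := congrFun hg v
      simp only [Pi.sub_apply] at hgv
      have hEv : Ediv v = max (x v) 0 + pad v := rfl
      have hxv : x v = D v - lap fst snd f v - nu fst snd ord v := rfl
      rw [lap_sub]
      omega
    obtain ⟨v, hv⟩ := nu_not_eff fst snd ord hinj (g - f)
    rw [hkey v] at hv
    have h1 := hD'eff v
    have h2 := le_max_left (x v) 0
    have h3 := hpad_nonneg v
    omega
  · -- r < mval → rankGe
    intro hlt
    intro Ediv hEeff hEdeg
    by_contra hno
    push_neg at hno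
    have hneff : ∀ f : V → ℤ, ∃ v, (D - Ediv) v - lap fst snd f v < 0 := by
      intro f
      by_contra hall
      push_neg at hall
      refine absurd ⟨f, funext fun v => ?_⟩ (hno (fun v => (D - Ediv) v - lap fst snd f v)
        (fun v => hall v))
      simp only [Pi.sub_apply]
      ring
    obtain ⟨ord, f, hinj, hdom⟩ := exists_dominated_by_nu fst snd hc (D - Ediv) hneff
    set x : V → ℤ := fun v => D v - lap fst snd f v - nu fst snd ord v with hx
    have hxle : ∀ v, x v ≤ Ediv v := by
      intro v
      have hd := hdom v
      simp only [Pi.sub_apply] at hd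
      have hxv : x v = D v - lap fst snd f v - nu fst snd ord v := rfl
      omega
    have hdegp_le : degp x ≤ (r : ℤ) := by
      rw [← hEdeg]
      exact degp_le_deg_of_le hxle hEeff
    have hmem : (degp x).toNat ∈ mSet fst snd D := by
      refine ⟨ord, f, hinj, ?_⟩
      rw [Int.toNat_of_nonneg (degp_nonneg _)]
    have hml := mval_le fst snd D hmem
    have hcast : ((degp x).toNat : ℤ) = degp x := Int.toNat_of_nonneg (degp_nonneg _)
    have : (mval fst snd D : ℤ) ≤ ((degp x).toNat : ℤ) := by exact_mod_cast hml
    omega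

lemma divRank_eq [Nonempty V] (hc : Connected fst snd) (D : V → ℤ) :
    divRank fst snd D = (mval fst snd D : ℤ) - 1 := by
  apply IsGreatest.csSup_eq
  constructor
  · -- membership
    rcases Nat.eq_zero_or_pos (mval fst snd D) with h|h
    · left; rw [h]; norm_num
    · right
      have h0 : (0:ℤ) ≤ (mval fst snd D : ℤ) - 1 := by
        have : (1:ℤ) ≤ (mval fst snd D : ℤ) := by exact_mod_cast h
        omega
      refine ⟨h0, ?_⟩
      rw [rankGe_iff fst snd hc]
      rw [Int.toNat_of_nonneg h0]
      omega
  · rintro z (rfl | ⟨h0, hz⟩)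
    · have : (0:ℤ) ≤ (mval fst snd D : ℤ) := Int.natCast_nonneg _
      omega
    · rw [rankGe_iff fst snd hc] at hz
      rw [Int.toNat_of_nonneg h0] at hz
      omega

/-- The pairing between the minimizing sets of `D` and `K - D`. -/
lemma mval_pair [Nonempty V] (hl : Loopless fst snd) (D : V → ℤ) :
    (mval fst snd (canonical fst snd - D) : ℤ)
      ≤ (mval fst snd D : ℤ) - (deg D - ((Fintype.card E : ℤ) - (Fintype.card V : ℤ))) := by
  obtain ⟨ord, f, hinj, hdegp⟩ := mval_mem fst snd D
  set x : V → ℤ := fun v => D v - lap fst snd f v - nu fst snd ord v with hx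
  set ord' : V → ℤ := fun v => - ord v with hord'
  have hinj' : Function.Injective ord' := fun v w h => hinj (by
    have : - ord v = - ord w := h
    omega)
  have hswap : (fun v => (canonical fst snd - D) v - lap fst snd (-f) v - nu fst snd ord' v)
      = fun v => - x v := by
    funext v
    have h1 := nu_add_nu_neg fst snd hl hinj v
    have h2 : lap fst snd (-f) v = - lap fst snd f v := by
      have := congrFun ((lapHom fst snd).map_neg f) v
      exact this
    simp only [Pi.sub_apply]
    rw [h2, hx]
    simp only
    rw [hord'] at *
    omega
  have hdeg_x : deg x = deg D - ((Fintype.card E : ℤ) - (Fintype.card V : ℤ)) := by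
    have h1 : deg x = deg D - deg (lap fst snd f) - deg (nu fst snd ord) := by
      rw [hx, deg, deg, deg, deg]
      rw [← Finset.sum_sub_distrib, ← Finset.sum_sub_distrib]
    rw [h1, deg_lap, deg_nu fst snd hl hinj]
    ring
  have hdegp_neg : degp (fun v => - x v) = degp x - deg x := by
    have := deg_eq_degp_sub x
    have hxx : degp (-x) = degp (fun v => - x v) := rfl
    omega
  have hmem : (degp x - deg x).toNat ∈ mSet fst snd (canonical fst snd - D) := by
    refine ⟨ord', -f, hinj', ?_⟩
    rw [hswap, hdegp_neg, Int.toNat_of_nonneg]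
    rw [← hdegp_neg]
    exact degp_nonneg _
  have hle := mval_le fst snd _ hmem
  have hcast : ((degp x - deg x).toNat : ℤ) = degp x - deg x := by
    rw [Int.toNat_of_nonneg]
    rw [← hdegp_neg]
    exact degp_nonneg _
  have : ((mval fst snd (canonical fst snd - D)) : ℤ) ≤ ((degp x - deg x).toNat : ℤ) := by
    exact_mod_cast hle
  omega

end RankChar
/-- Riemann-Roch for graphs (Baker–Norine):
`r(D) - r(K_G - D) = deg(D) - g + 1`. -/
theorem graph_riemann_roch
    (fst snd : E → V) (hl : Loopless fst snd) (hc : Connected fst snd)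
    (D : V → ℤ) :
    divRank fst snd D - divRank fst snd (canonical fst snd - D) =
      deg D - genus V E + 1 := by
  classical
  by_cases hV : Nonempty V
  · haveI := hV
    rw [divRank_eq fst snd hc D, divRank_eq fst snd hc (canonical fst snd - D)]
    have h1 := mval_pair fst snd hl D
    have h2 := mval_pair fst snd hl (canonical fst snd - D)
    have hDD : canonical fst snd - (canonical fst snd - D) = D := by
      funext v; simp only [Pi.sub_apply]; ring
    rw [hDD] at h2
    have hdegK : deg (canonical fst snd - D)
        = (2 * (Fintype.card E : ℤ) - 2 * (Fintype.card V : ℤ)) - deg D := by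
      rw [deg_sub, deg_canonical fst snd hl]
    rw [hdegK] at h2
    unfold genus
    omega
  · haveI : IsEmpty V := not_nonempty_iff.mp hV
    haveI : IsEmpty E := Function.isEmpty fst
    have hrank : ∀ D0 : V → ℤ, divRank fst snd D0 = 0 := by
      intro D0
      unfold divRank
      have hset : {r : ℤ | r = -1 ∨ (0 ≤ r ∧ rankGe fst snd D0 r.toNat)}
          = {r : ℤ | -1 ≤ r} := by
        ext r
        simp only [Set.mem_setOf_eq]
        constructor
        · rintro (rfl|⟨h,_⟩) <;> omega
        · intro h
          rcases eq_or_lt_of_le h with h'|h'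
          · exact Or.inl h'.symm
          · refine Or.inr ⟨by omega, ?_⟩
            intro Ediv hEeff hEdeg
            exact ⟨0, fun v => isEmptyElim v, 0, funext fun v => isEmptyElim v⟩
      rw [hset]
      have hnb : ¬ BddAbove {r : ℤ | -1 ≤ r} := by
        rintro ⟨b, hb⟩
        have h1 : max b 0 + 1 ∈ {r : ℤ | -1 ≤ r} := by
          simp only [Set.mem_setOf_eq]
          have := le_max_right b (0:ℤ)
          omega
        have h2 := hb h1
        have h3 := le_max_left b (0:ℤ)
        omega
      rw [csSup_of_not_bddAbove hnb]
      simp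
    rw [hrank D, hrank (canonical fst snd - D)]
    have hdeg : deg D = 0 := by simp [deg]
    have hV0 : Fintype.card V = 0 := Fintype.card_eq_zero
    have hE0 : Fintype.card E = 0 := Fintype.card_eq_zero
    unfold genus
    rw [hdeg, hV0, hE0]
    norm_num
end ChipFiring
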